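/- arXiv:1204.1255 — 7 statements merged into one kernel-verified Lean document; each statement's English description precedes it below -/
import Mathlib

section
/- The exponential mechanism with its pricing scheme is incentive compatible: for every nonempty finite set R, every ε > 0, every number of agents n, every agent i, every true valuation v_i : R → [0,1], every bid b_i : R → [0,1], and all bids b_k : R → [0,1] of the other agents k ≠ i, the expected utility of agent i from bidding truthfully is at least her expected utility under any other bid: u_i(v_i; (v_i, b_{−i})) ≥ u_i(v_i; (b_i, b_{−i})). -/
open scoped Classical
open Finset

/-- The exponential mechanism distribution on a finite set `R` with quality function `q`:
`Pr[r] = exp((ε/2)·q(r)) / ∑_{r'} exp((ε/2)·q(r'))`. -/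
noncomputable def expDist {R : Type*} [Fintype R] (ε : ℝ) (q : R → ℝ) : R → ℝ :=
  fun r => Real.exp (ε / 2 * q r) / ∑ r' : R, Real.exp (ε / 2 * q r')

/-- Shannon entropy `S(ν) = −∑_r ν(r)·ln ν(r)`, with the convention `0·ln 0 = 0`. -/
noncomputable def shannonEntropy {R : Type*} [Fintype R] (ν : R → ℝ) : ℝ :=
  -∑ r : R, ν r * Real.log (ν r)

/-- The payment charged to agent `i` by the exponential mechanism under bid profile `b`:
`p_i(b) = −E_{r ∼ Exp_ε(∑_k b_k)}[∑_{k≠i} b_k(r)] − (2/ε)·S(Exp_ε(∑_k b_k))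
          + (2/ε)·ln(∑_{r∈R} exp((ε/2)·∑_{k≠i} b_k(r)))`. -/
noncomputable def payment {R : Type*} [Fintype R] (ε : ℝ) {n : ℕ}
    (b : Fin n → R → ℝ) (i : Fin n) : ℝ :=
  -(∑ r : R, expDist ε (fun r => ∑ k, b k r) r * ∑ k ∈ Finset.univ.erase i, b k r)
    - (2 / ε) * shannonEntropy (expDist ε (fun r => ∑ k, b k r))
    + (2 / ε) * Real.log (∑ r : R, Real.exp (ε / 2 * ∑ k ∈ Finset.univ.erase i, b k r))

/-- The expected utility of agent `i` with true valuation `vi` under bid profile `b`: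
`u_i(v_i; b) = E_{r ∼ Exp_ε(∑_k b_k)}[v_i(r)] − p_i(b)`. -/
noncomputable def utility {R : Type*} [Fintype R] (ε : ℝ) {n : ℕ}
    (vi : R → ℝ) (b : Fin n → R → ℝ) (i : Fin n) : ℝ :=
  (∑ r : R, expDist ε (fun r => ∑ k, b k r) r * vi r) - payment ε b i

lemma Zpos {R : Type*} [Fintype R] [Nonempty R] (ε : ℝ) (q : R → ℝ) :
    0 < ∑ r : R, Real.exp (ε / 2 * q r) :=
  Finset.sum_pos (fun r _ => Real.exp_pos _) Finset.univ_nonempty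

lemma expDist_sum_one {R : Type*} [Fintype R] [Nonempty R] (ε : ℝ) (q : R → ℝ) :
    ∑ r : R, expDist ε q r = 1 := by
  unfold expDist
  rw [← Finset.sum_div, div_self (Zpos ε q).ne']

lemma gibbs_ineq {R : Type*} [Fintype R] [Nonempty R] {ε : ℝ} (hε : 0 < ε) (x y : R → ℝ) :
    Real.log (∑ r : R, Real.exp (ε / 2 * y r)) ≥
      Real.log (∑ r : R, Real.exp (ε / 2 * x r))
        + (ε / 2) * ∑ r : R, expDist ε x r * (y r - x r) := by
  set Zx := ∑ r : R, Real.exp (ε / 2 * x r) with hZx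
  have hZxpos : 0 < Zx := Zpos ε x
  set D : ℝ := (ε / 2) * ∑ r : R, expDist ε x r * (y r - x r) with hD
  have hsum : ∑ r : R, Real.exp (ε / 2 * x r) * (ε / 2 * (y r - x r)) = Zx * D := by
    rw [hD, Finset.mul_sum, Finset.mul_sum]
    refine Finset.sum_congr rfl fun r _ => ?_
    unfold expDist
    rw [← hZx]
    field_simp
  have key : ∑ r : R, Real.exp (ε / 2 * y r) ≥ Real.exp D * Zx := by
    have h1 : ∀ r : R, Real.exp (ε / 2 * y r) ≥
        Real.exp D * (Real.exp (ε / 2 * x r) * (1 + (ε / 2 * (y r - x r) - D))) := by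
      intro r
      have heq : Real.exp (ε / 2 * y r)
          = Real.exp D * Real.exp (ε / 2 * x r) * Real.exp (ε / 2 * (y r - x r) - D) := by
        rw [← Real.exp_add, ← Real.exp_add]; congr 1; ring
      have h2 := Real.add_one_le_exp (ε / 2 * (y r - x r) - D)
      have h3 : (0:ℝ) ≤ Real.exp D * Real.exp (ε / 2 * x r) := by positivity
      have := mul_le_mul_of_nonneg_left h2 h3
      rw [heq]
      nlinarith
    calc ∑ r : R, Real.exp (ε / 2 * y r)
        ≥ ∑ r : R, Real.exp D * (Real.exp (ε / 2 * x r) * (1 + (ε / 2 * (y r - x r) - D))) :=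
          Finset.sum_le_sum (fun r _ => h1 r)
      _ = Real.exp D * Zx := by
          rw [← Finset.mul_sum]
          congr 1
          have : ∑ r : R, Real.exp (ε / 2 * x r) * (1 + (ε / 2 * (y r - x r) - D))
              = Zx + (∑ r : R, Real.exp (ε / 2 * x r) * (ε / 2 * (y r - x r))) - Zx * D := by
            have hterm : ∀ r : R, Real.exp (ε / 2 * x r) * (1 + (ε / 2 * (y r - x r) - D))
                = Real.exp (ε / 2 * x r) + Real.exp (ε / 2 * x r) * (ε / 2 * (y r - x r))
                  - Real.exp (ε / 2 * x r) * D := fun r => by ring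
            rw [Finset.sum_congr rfl fun r _ => hterm r, Finset.sum_sub_distrib,
              Finset.sum_add_distrib, ← Finset.sum_mul, ← hZx]
          rw [this, hsum]; ring
  have := Real.log_le_log (by positivity) key
  rw [Real.log_mul (Real.exp_ne_zero D) hZxpos.ne', Real.log_exp] at this
  linarith

lemma entropy_id {R : Type*} [Fintype R] [Nonempty R] {ε : ℝ} (hε : 0 < ε) (q : R → ℝ) :
    ∑ r : R, expDist ε q r * q r + (2 / ε) * shannonEntropy (expDist ε q)
      = (2 / ε) * Real.log (∑ r : R, Real.exp (ε / 2 * q r)) := by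
  set Z := ∑ r : R, Real.exp (ε / 2 * q r) with hZ
  have hZpos : 0 < Z := Zpos ε q
  have hlog : ∀ r : R, Real.log (expDist ε q r) = ε / 2 * q r - Real.log Z := by
    intro r
    unfold expDist
    rw [← hZ, Real.log_div (Real.exp_ne_zero _) hZpos.ne', Real.log_exp]
  have hS : shannonEntropy (expDist ε q)
      = -(ε / 2) * (∑ r : R, expDist ε q r * q r) + Real.log Z := by
    unfold shannonEntropy
    have : ∑ r : R, expDist ε q r * Real.log (expDist ε q r)
        = (ε / 2) * (∑ r : R, expDist ε q r * q r) - Real.log Z := by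
      calc ∑ r : R, expDist ε q r * Real.log (expDist ε q r)
          = ∑ r : R, (ε / 2 * (expDist ε q r * q r) - expDist ε q r * Real.log Z) := by
            refine Finset.sum_congr rfl fun r _ => ?_
            rw [hlog r]; ring
        _ = (ε / 2) * (∑ r : R, expDist ε q r * q r) - Real.log Z := by
            rw [Finset.sum_sub_distrib, ← Finset.mul_sum, ← Finset.sum_mul,
              expDist_sum_one, one_mul]
    rw [this]; ring
  rw [hS]
  have h2 : (2 / ε) * (ε / 2) = 1 := by field_simp
  field_simp
  ring

lemma utility_formula {R : Type*} [Fintype R] [Nonempty R] {ε : ℝ} (hε : 0 < ε)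
    {n : ℕ} (i : Fin n) (vi β : R → ℝ) (b : Fin n → R → ℝ) :
    utility ε vi (Function.update b i β) i
      = (∑ r : R, expDist ε (fun r => β r + ∑ k ∈ Finset.univ.erase i, b k r) r
          * (vi r - β r))
        + (2 / ε) * Real.log (∑ r : R,
            Real.exp (ε / 2 * (β r + ∑ k ∈ Finset.univ.erase i, b k r)))
        - (2 / ε) * Real.log (∑ r : R,
            Real.exp (ε / 2 * ∑ k ∈ Finset.univ.erase i, b k r)) := by
  set s : R → ℝ := fun r => ∑ k ∈ Finset.univ.erase i, b k r with hsdef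
  have hs : ∀ r : R, ∑ k ∈ Finset.univ.erase i, Function.update b i β k r = s r := by
    intro r
    refine Finset.sum_congr rfl fun k hk => ?_
    rw [Function.update_of_ne (Finset.ne_of_mem_erase hk)]
  have hq : (fun r => ∑ k, Function.update b i β k r) = fun r => β r + s r := by
    funext r
    rw [← Finset.add_sum_erase _ _ (Finset.mem_univ i), Function.update_self, hs r]
  unfold utility payment
  rw [hq]
  simp only [hs]
  have hent := entropy_id hε (fun r => β r + s r)
  set ν : R → ℝ := expDist ε (fun r => β r + s r) with hν
  have hsplit : ∑ r : R, ν r * (β r + s r) = (∑ r : R, ν r * β r) + ∑ r : R, ν r * s r := by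
    rw [← Finset.sum_add_distrib]
    exact Finset.sum_congr rfl fun r _ => by ring
  have hsplit2 : ∑ r : R, ν r * (vi r - β r)
      = (∑ r : R, ν r * vi r) - ∑ r : R, ν r * β r := by
    rw [← Finset.sum_sub_distrib]
    exact Finset.sum_congr rfl fun r _ => by ring
  rw [hsplit] at hent
  linarith

/-- Incentive compatibility of the exponential mechanism with its pricing scheme:
truthful bidding maximizes agent `i`'s expected utility,
`u_i(v_i; (v_i, b_{−i})) ≥ u_i(v_i; (b_i, b_{−i}))`. -/
theorem expMech_incentive_compatible {R : Type*} [Fintype R] [Nonempty R]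
    (ε : ℝ) (hε : 0 < ε) (n : ℕ) (i : Fin n) (vi bi : R → ℝ) (b : Fin n → R → ℝ)
    (hvi : ∀ r, vi r ∈ Set.Icc (0 : ℝ) 1) (hbi : ∀ r, bi r ∈ Set.Icc (0 : ℝ) 1)
    (hb : ∀ k r, b k r ∈ Set.Icc (0 : ℝ) 1) :
    utility ε vi (Function.update b i vi) i ≥ utility ε vi (Function.update b i bi) i := by
  rw [utility_formula hε i vi vi b, utility_formula hε i vi bi b]
  set s : R → ℝ := fun r => ∑ k ∈ Finset.univ.erase i, b k r with hsdef
  simp only [sub_self, mul_zero, Finset.sum_const_zero, zero_add]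
  have hg := gibbs_ineq hε (fun r => bi r + s r) (fun r => vi r + s r)
  have hT : ∑ r : R, expDist ε (fun r => bi r + s r) r * ((vi r + s r) - (bi r + s r))
      = ∑ r : R, expDist ε (fun r => bi r + s r) r * (vi r - bi r) :=
    Finset.sum_congr rfl fun r _ => by ring
  rw [hT] at hg
  set L := Real.log (∑ r : R, Real.exp (ε / 2 * (vi r + s r)))
  set M := Real.log (∑ r : R, Real.exp (ε / 2 * (bi r + s r)))
  set T := ∑ r : R, expDist ε (fun r => bi r + s r) r * (vi r - bi r)
  have hmul : (2 / ε) * (M + (ε / 2) * T) ≤ (2 / ε) * L :=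
    mul_le_mul_of_nonneg_left hg (by positivity)
  have hexp : (2 / ε) * (M + (ε / 2) * T) = (2 / ε) * M + T := by
    field_simp
  linarith
end

section
/- The exponential mechanism with its pricing scheme is individually rational: for every nonempty finite set R, every ε > 0, every number of agents n, every agent i, every true valuation v_i : R → [0,1], and all bids b_k : R → [0,1] of the other agents k ≠ i, agent i's expected utility from bidding truthfully is nonnegative: u_i(v_i; (v_i, b_{−i})) ≥ 0. -/
open scoped Classical
open Finset

/-- Individual rationality of the exponential mechanism with its pricing scheme:
truthful bidding guarantees nonnegative expected utility,
`u_i(v_i; (v_i, b_{−i})) ≥ 0`. -/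
theorem expMech_individually_rational {R : Type*} [Fintype R] [Nonempty R]
    (ε : ℝ) (hε : 0 < ε) (n : ℕ) (i : Fin n) (vi : R → ℝ) (b : Fin n → R → ℝ)
    (hvi : ∀ r, vi r ∈ Set.Icc (0 : ℝ) 1)
    (hb : ∀ k r, b k r ∈ Set.Icc (0 : ℝ) 1) :
    utility ε vi (Function.update b i vi) i ≥ 0 := by
  classical
  set b' := Function.update b i vi with hb'
  set q : R → ℝ := fun r => ∑ k, b' k r with hq
  set q' : R → ℝ := fun r => ∑ k ∈ Finset.univ.erase i, b' k r with hq'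
  set Z : ℝ := ∑ r : R, Real.exp (ε / 2 * q r) with hZ
  set Z' : ℝ := ∑ r : R, Real.exp (ε / 2 * q' r) with hZ'
  have hZpos : 0 < Z :=
    Finset.sum_pos (fun r _ => Real.exp_pos _) ⟨Classical.arbitrary R, Finset.mem_univ _⟩
  have hZ'pos : 0 < Z' :=
    Finset.sum_pos (fun r _ => Real.exp_pos _) ⟨Classical.arbitrary R, Finset.mem_univ _⟩
  have hqq' : ∀ r, q r = vi r + q' r := by
    intro r
    have := (Finset.add_sum_erase Finset.univ (fun k => b' k r) (Finset.mem_univ i)).symm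
    simpa [hq, hq', hb', Function.update_self] using this
  have hν : ∀ r, expDist ε q r = Real.exp (ε / 2 * q r) / Z := fun r => rfl
  have hsum1 : ∑ r : R, expDist ε q r = 1 := by
    simp only [hν]
    rw [← Finset.sum_div]
    exact div_self hZpos.ne'
  have hlog : ∀ r, Real.log (expDist ε q r) = ε / 2 * q r - Real.log Z := by
    intro r
    rw [hν, Real.log_div (Real.exp_pos _).ne' hZpos.ne', Real.log_exp]
  have hS : shannonEntropy (expDist ε q)
      = Real.log Z - ε / 2 * ∑ r : R, expDist ε q r * q r := by
    unfold shannonEntropy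
    have : ∀ r : R, expDist ε q r * Real.log (expDist ε q r)
        = ε / 2 * (expDist ε q r * q r) - expDist ε q r * Real.log Z := by
      intro r; rw [hlog]; ring
    rw [Finset.sum_congr rfl (fun r _ => this r), Finset.sum_sub_distrib,
      ← Finset.mul_sum, ← Finset.sum_mul, hsum1]
    ring
  have hEq : ∑ r : R, expDist ε q r * vi r + ∑ r : R, expDist ε q r * q' r
      = ∑ r : R, expDist ε q r * q r := by
    rw [← Finset.sum_add_distrib]
    exact Finset.sum_congr rfl (fun r _ => by rw [hqq' r]; ring)
  have hutil : utility ε vi b' i = (2 / ε) * (Real.log Z - Real.log Z') := by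
    unfold utility payment
    have h1 : (fun r => ∑ k, b' k r) = q := rfl
    have h2 : (fun r => (∑ k ∈ Finset.univ.erase i, b' k r : ℝ)) = q' := rfl
    rw [h1]
    have h2ε : (2 / ε) * (ε / 2) = 1 := by field_simp
    have : (∑ r : R, expDist ε q r * ∑ k ∈ Finset.univ.erase i, b' k r)
        = ∑ r : R, expDist ε q r * q' r := rfl
    rw [this, hS]
    have : Real.log (∑ r : R, Real.exp (ε / 2 * ∑ k ∈ Finset.univ.erase i, b' k r))
        = Real.log Z' := rfl
    rw [this]
    have := hEq
    have h3 : 2 / ε * (ε / 2 * ∑ r : R, expDist ε q r * q r)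
        = ∑ r : R, expDist ε q r * q r := by
      field_simp
    linear_combination hEq - h3
  rw [hutil]
  have hZle : Z' ≤ Z := by
    apply Finset.sum_le_sum
    intro r _
    apply Real.exp_le_exp.mpr
    have : q' r ≤ q r := by rw [hqq' r]; nlinarith [(hvi r).1]
    nlinarith
  have hlogle := Real.log_le_log hZ'pos hZle
  have h2 : 0 ≤ 2 / ε := by positivity
  nlinarith
end

section
/- The exponential mechanism's allocation rule is ε-differentially private: let R be a nonempty finite set, ε > 0, and let v = (v_1,…,v_n) and v' = (v'_1,…,v'_n) be two valuation profiles with all v_k, v'_k : R → [0,1], such that v_k = v'_k for all k except at most one agent. Then for every outcome r ∈ R, Exp_ε(∑_k v_k)(r) ≤ exp(ε) · Exp_ε(∑_k v'_k)(r); consequently for every subset S ⊆ R, Pr_{r ∼ Exp_ε(∑_k v_k)}[r ∈ S] ≤ exp(ε) · Pr_{r ∼ Exp_ε(∑_k v'_k)}[r ∈ S]. -/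
open scoped Classical
open Finset

/-- The exponential mechanism's allocation rule is `ε`-differentially private:
if the valuation profiles `v` and `v'` (into `[0,1]`) differ in the valuation of at most
one agent, then pointwise `Exp_ε(∑_k v_k)(r) ≤ exp(ε)·Exp_ε(∑_k v'_k)(r)`, and consequently
for every subset `S ⊆ R` the probability of `S` under the first distribution is at most
`exp(ε)` times the probability under the second. -/
theorem expMech_differentially_private {R : Type*} [Fintype R] [Nonempty R]
    (ε : ℝ) (hε : 0 < ε) (n : ℕ) (v v' : Fin n → R → ℝ)
    (hv : ∀ k r, v k r ∈ Set.Icc (0 : ℝ) 1) (hv' : ∀ k r, v' k r ∈ Set.Icc (0 : ℝ) 1)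
    (hdiff : ∃ i : Fin n, ∀ k : Fin n, k ≠ i → v k = v' k) :
    (∀ r : R, expDist ε (fun r => ∑ k, v k r) r
        ≤ Real.exp ε * expDist ε (fun r => ∑ k, v' k r) r) ∧
    (∀ S : Finset R, ∑ r ∈ S, expDist ε (fun r => ∑ k, v k r) r
        ≤ Real.exp ε * ∑ r ∈ S, expDist ε (fun r => ∑ k, v' k r) r) := by
  obtain ⟨i, hi⟩ := hdiff
  set q : R → ℝ := fun r => ∑ k, v k r with hq
  set q' : R → ℝ := fun r => ∑ k, v' k r with hq'
  have hclose : ∀ r, |q r - q' r| ≤ 1 := by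
    intro r
    have : q r - q' r = v i r - v' i r := by
      have : q r - q' r = ∑ k, (v k r - v' k r) := by
        simp [hq, hq', Finset.sum_sub_distrib]
      rw [this, Finset.sum_eq_single i]
      · intro k _ hk; rw [hi k hk]; ring
      · simp
    rw [this]
    have h1 := hv i r; have h2 := hv' i r
    rw [abs_le]
    constructor <;> simp [Set.mem_Icc] at h1 h2 <;> linarith [h1.1, h1.2, h2.1, h2.2]
  have key : ∀ (a b : R → ℝ), (∀ r, |a r - b r| ≤ 1) →
      ∀ r : R, expDist ε a r ≤ Real.exp ε * expDist ε b r := by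
    intro a b hab r
    have hDb : 0 < ∑ r' : R, Real.exp (ε / 2 * b r') :=
      Finset.sum_pos (fun _ _ => Real.exp_pos _) Finset.univ_nonempty
    have hDa : 0 < ∑ r' : R, Real.exp (ε / 2 * a r') :=
      Finset.sum_pos (fun _ _ => Real.exp_pos _) Finset.univ_nonempty
    have hnum : Real.exp (ε / 2 * a r) ≤ Real.exp (ε / 2) * Real.exp (ε / 2 * b r) := by
      rw [← Real.exp_add]
      apply Real.exp_le_exp.2
      have := (abs_le.1 (hab r)).2
      nlinarith
    have hden : ∑ r' : R, Real.exp (ε / 2 * b r')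
        ≤ Real.exp (ε / 2) * ∑ r' : R, Real.exp (ε / 2 * a r') := by
      rw [Finset.mul_sum]
      apply Finset.sum_le_sum
      intro r' _
      rw [← Real.exp_add]
      apply Real.exp_le_exp.2
      have := (abs_le.1 (hab r')).1
      nlinarith
    simp only [expDist]
    rw [← mul_div_assoc, div_le_div_iff₀ hDa hDb]
    calc Real.exp (ε / 2 * a r) * (∑ r' : R, Real.exp (ε / 2 * b r'))
        ≤ (Real.exp (ε / 2) * Real.exp (ε / 2 * b r)) *
          (Real.exp (ε / 2) * ∑ r' : R, Real.exp (ε / 2 * a r')) := by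
          apply mul_le_mul hnum hden hDb.le; positivity
      _ = Real.exp ε * Real.exp (ε / 2 * b r) * ∑ r' : R, Real.exp (ε / 2 * a r') := by
          rw [show Real.exp ε = Real.exp (ε/2) * Real.exp (ε/2) by
            rw [← Real.exp_add]; ring_nf]
          ring
  have hpt := key q q' hclose
  refine ⟨hpt, fun S => ?_⟩
  rw [Finset.mul_sum]
  exact Finset.sum_le_sum fun r _ => hpt r
end

section
/- Accuracy of the exponential mechanism: let R be a nonempty finite set, ε > 0, q : R → ℝ a quality function, and t ≥ 0. Then Pr_{r ∼ Exp_ε(q)} [ q(r) < max_{r' ∈ R} q(r') − (2/ε)·(ln |R| + t) ] ≤ exp(−t). -/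
open scoped Classical
open Finset

/-- Accuracy of the exponential mechanism:
`Pr_{r ∼ Exp_ε(q)}[q(r) < max_{r'} q(r') − (2/ε)·(ln|R| + t)] ≤ exp(−t)`. -/
theorem expMech_accuracy {R : Type*} [Fintype R] [Nonempty R]
    (ε : ℝ) (hε : 0 < ε) (q : R → ℝ) (t : ℝ) (ht : 0 ≤ t) :
    ∑ r ∈ Finset.univ.filter (fun r : R =>
        q r < Finset.univ.sup' Finset.univ_nonempty q
          - (2 / ε) * (Real.log (Fintype.card R) + t)),
      expDist ε q r ≤ Real.exp (-t) := by
  set M := Finset.univ.sup' Finset.univ_nonempty q with hM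
  set S := ∑ r' : R, Real.exp (ε / 2 * q r') with hS
  have hSpos : 0 < S := Finset.sum_pos (fun _ _ => Real.exp_pos _) Finset.univ_nonempty
  obtain ⟨r0, -, hr0⟩ := Finset.exists_mem_eq_sup' (Finset.univ_nonempty (α := R)) q
  have hSge : Real.exp (ε / 2 * M) ≤ S := by
    rw [hM, hr0]
    exact Finset.single_le_sum (f := fun r => Real.exp (ε / 2 * q r)) (fun r _ => (Real.exp_pos _).le) (Finset.mem_univ r0)
  have hn : (0 : ℝ) < (Fintype.card R : ℝ) := by
    exact_mod_cast Fintype.card_pos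
  set F := Finset.univ.filter (fun r : R =>
      q r < M - (2 / ε) * (Real.log (Fintype.card R) + t)) with hF
  have key : ∀ r ∈ F, Real.exp (ε / 2 * q r)
      ≤ Real.exp (ε / 2 * M) * (Real.exp (-t) / (Fintype.card R : ℝ)) := by
    intro r hr
    rw [hF, Finset.mem_filter] at hr
    have h1 : Real.exp (ε / 2 * q r)
        ≤ Real.exp (ε / 2 * (M - (2 / ε) * (Real.log (Fintype.card R) + t))) := by
      apply Real.exp_le_exp.2
      nlinarith [hr.2]
    refine h1.trans_eq ?_
    have hεne : ε ≠ 0 := ne_of_gt hε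
    have : ε / 2 * (M - (2 / ε) * (Real.log (Fintype.card R) + t))
        = ε / 2 * M + (-(Real.log (Fintype.card R)) + -t) := by
      field_simp
      ring
    rw [this, Real.exp_add, Real.exp_add, Real.exp_neg, Real.exp_log hn]
    ring
  have hsum : ∑ r ∈ F, Real.exp (ε / 2 * q r)
      ≤ Real.exp (ε / 2 * M) * Real.exp (-t) := by
    calc ∑ r ∈ F, Real.exp (ε / 2 * q r)
        ≤ ∑ _r ∈ F, Real.exp (ε / 2 * M) * (Real.exp (-t) / (Fintype.card R : ℝ)) :=
          Finset.sum_le_sum key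
      _ = F.card * (Real.exp (ε / 2 * M) * (Real.exp (-t) / (Fintype.card R : ℝ))) := by
          rw [Finset.sum_const, nsmul_eq_mul]
      _ ≤ (Fintype.card R : ℝ) * (Real.exp (ε / 2 * M) * (Real.exp (-t) / (Fintype.card R : ℝ))) := by
          apply mul_le_mul_of_nonneg_right
          · exact_mod_cast Finset.card_le_univ F
          · positivity
      _ = Real.exp (ε / 2 * M) * Real.exp (-t) := by
          field_simp
  have : ∑ r ∈ F, expDist ε q r = (∑ r ∈ F, Real.exp (ε / 2 * q r)) / S := by
    rw [Finset.sum_div]; rfl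
  rw [this, div_le_iff₀ hSpos]
  calc ∑ r ∈ F, Real.exp (ε / 2 * q r) ≤ Real.exp (ε / 2 * M) * Real.exp (-t) := hsum
    _ ≤ S * Real.exp (-t) := by
        apply mul_le_mul_of_nonneg_right hSge (Real.exp_pos _).le
    _ = Real.exp (-t) * S := mul_comm _ _
end

section
/- Payment bounds and sensitivity: let R be a nonempty finite set, ε > 0, and n agents. For every bid profile b = (b_1,…,b_n) with all b_k : R → [0,1] and every agent j, the exponential mechanism's payment satisfies 0 ≤ p_j(b) ≤ 1. Consequently, for any two bid profiles b and b' (all entries mapping R into [0,1]) that differ in the valuation of only one agent, |p_j(b) − p_j(b')| ≤ 1 for every j. -/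
open scoped Classical
open Finset

lemma payment_mem_Icc {R : Type*} [Fintype R] [Nonempty R]
    (ε : ℝ) (hε : 0 < ε) {n : ℕ} (b : Fin n → R → ℝ)
    (hb : ∀ k r, b k r ∈ Set.Icc (0 : ℝ) 1) (j : Fin n) :
    0 ≤ payment ε b j ∧ payment ε b j ≤ 1 := by
  set q : R → ℝ := fun r => ∑ k, b k r with hqdef
  set qj : R → ℝ := fun r => ∑ k ∈ Finset.univ.erase j, b k r with hqjdef
  have hq : ∀ r, q r = qj r + b j r := by
    intro r
    simp only [hqdef, hqjdef]
    rw [Finset.sum_erase_add _ _ (Finset.mem_univ j)]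
  set Z : ℝ := ∑ r : R, Real.exp (ε / 2 * q r) with hZdef
  set Zj : ℝ := ∑ r : R, Real.exp (ε / 2 * qj r) with hZjdef
  have hZ : 0 < Z := Finset.sum_pos (fun r _ => Real.exp_pos _) Finset.univ_nonempty
  have hZj : 0 < Zj := Finset.sum_pos (fun r _ => Real.exp_pos _) Finset.univ_nonempty
  have hν : ∀ r, expDist ε q r = Real.exp (ε / 2 * q r) / Z := fun r => rfl
  have hνpos : ∀ r, 0 < expDist ε q r := fun r => by
    rw [hν]; exact div_pos (Real.exp_pos _) hZ
  have hνsum : ∑ r : R, expDist ε q r = 1 := by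
    simp only [hν]
    rw [← Finset.sum_div, ← hZdef, div_self hZ.ne']
  -- entropy identity
  have hlog : ∀ r, Real.log (expDist ε q r) = ε / 2 * q r - Real.log Z := by
    intro r
    rw [hν, Real.log_div (Real.exp_pos _).ne' hZ.ne', Real.log_exp]
  have hS : shannonEntropy (expDist ε q)
      = -(ε / 2) * (∑ r : R, expDist ε q r * q r) + Real.log Z := by
    unfold shannonEntropy
    have : ∀ r ∈ Finset.univ, expDist ε q r * Real.log (expDist ε q r)
        = ε / 2 * (expDist ε q r * q r) - expDist ε q r * Real.log Z := by
      intro r _; rw [hlog]; ring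
    rw [Finset.sum_congr rfl this, Finset.sum_sub_distrib, ← Finset.mul_sum,
      ← Finset.sum_mul, hνsum]
    ring
  set E : ℝ := ∑ r : R, expDist ε q r * b j r with hEdef
  have hkey : (∑ r : R, expDist ε q r * q r) - (∑ r : R, expDist ε q r * qj r) = E := by
    rw [hEdef, ← Finset.sum_sub_distrib]
    refine Finset.sum_congr rfl fun r _ => ?_
    rw [hq r]; ring
  have hp : payment ε b j = E - (2 / ε) * (Real.log Z - Real.log Zj) := by
    unfold payment
    rw [show (fun r => ∑ k, b k r) = q from rfl]
    rw [hS, ← hZjdef]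
    have h1 : (2 / ε) * (ε / 2) = 1 := by field_simp
    have : (2 / ε) * (-(ε / 2) * (∑ r : R, expDist ε q r * q r) + Real.log Z)
        = -(∑ r : R, expDist ε q r * q r) + (2 / ε) * Real.log Z := by
      rw [mul_add, ← mul_assoc, mul_neg, h1]; ring
    rw [this, ← hkey]
    simp only [hqjdef]
    ring
  have hE0 : 0 ≤ E :=
    Finset.sum_nonneg fun r _ => mul_nonneg (hνpos r).le (hb j r).1
  have hE1 : E ≤ 1 := by
    calc E ≤ ∑ r : R, expDist ε q r := by
          refine Finset.sum_le_sum fun r _ => ?_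
          calc expDist ε q r * b j r ≤ expDist ε q r * 1 :=
                mul_le_mul_of_nonneg_left (hb j r).2 (hνpos r).le
            _ = expDist ε q r := mul_one _
      _ = 1 := hνsum
  have hZZj : Zj ≤ Z := by
    refine Finset.sum_le_sum fun r _ => ?_
    apply Real.exp_le_exp.2
    apply mul_le_mul_of_nonneg_left _ (by positivity : (0:ℝ) ≤ ε / 2)
    rw [hq r]; linarith [(hb j r).1]
  have hlogZZj : 0 ≤ Real.log Z - Real.log Zj :=
    sub_nonneg.2 (Real.log_le_log hZj hZZj)
  -- Jensen
  have hfrac : ∑ r : R, expDist ε q r * Real.exp (-(ε / 2 * b j r)) = Zj / Z := by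
    rw [hZjdef, Finset.sum_div]
    refine Finset.sum_congr rfl fun r _ => ?_
    rw [hν, div_mul_eq_mul_div, ← Real.exp_add]
    congr 2
    rw [hq r]; ring
  have hjensen : Real.exp (∑ r : R, expDist ε q r * (-(ε / 2 * b j r)))
      ≤ ∑ r : R, expDist ε q r * Real.exp (-(ε / 2 * b j r)) := by
    have := convexOn_exp.map_sum_le (t := Finset.univ)
      (w := fun r => expDist ε q r) (p := fun r => -(ε / 2 * b j r))
      (fun r _ => (hνpos r).le) hνsum (fun r _ => Set.mem_univ _)
    simpa [smul_eq_mul] using this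
  have hsum_neg : ∑ r : R, expDist ε q r * (-(ε / 2 * b j r)) = -(ε / 2 * E) := by
    rw [hEdef, Finset.mul_sum, ← Finset.sum_neg_distrib]
    refine Finset.sum_congr rfl fun r _ => by ring
  have hlog_le : Real.log Z - Real.log Zj ≤ ε / 2 * E := by
    have h2 : Real.exp (-(ε / 2 * E)) ≤ Zj / Z := by
      rw [← hsum_neg, ← hfrac]; exact hjensen
    have h3 : -(ε / 2 * E) ≤ Real.log (Zj / Z) :=
      (Real.le_log_iff_exp_le (div_pos hZj hZ)).2 h2
    rw [Real.log_div hZj.ne' hZ.ne'] at h3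
    linarith
  constructor
  · rw [hp]
    have : (2 / ε) * (Real.log Z - Real.log Zj) ≤ (2 / ε) * (ε / 2 * E) :=
      mul_le_mul_of_nonneg_left hlog_le (by positivity)
    have h1 : (2 / ε) * (ε / 2 * E) = E := by field_simp
    linarith
  · rw [hp]
    have : 0 ≤ (2 / ε) * (Real.log Z - Real.log Zj) :=
      mul_nonneg (by positivity) hlogZZj
    linarith

/-- Payment bounds and sensitivity for the exponential mechanism: every payment lies in
`[0,1]`, and consequently changing the valuation of a single agent changes each payment
by at most `1`. -/

theorem expMech_payment_bounds_and_sensitivity {R : Type*} [Fintype R] [Nonempty R]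
    (ε : ℝ) (hε : 0 < ε) (n : ℕ) :
    (∀ b : Fin n → R → ℝ, (∀ k r, b k r ∈ Set.Icc (0 : ℝ) 1) →
      ∀ j : Fin n, 0 ≤ payment ε b j ∧ payment ε b j ≤ 1) ∧
    (∀ b b' : Fin n → R → ℝ, (∀ k r, b k r ∈ Set.Icc (0 : ℝ) 1) →
      (∀ k r, b' k r ∈ Set.Icc (0 : ℝ) 1) →
      (∃ i : Fin n, ∀ k : Fin n, k ≠ i → b k = b' k) →
      ∀ j : Fin n, |payment ε b j - payment ε b' j| ≤ 1) := by
  refine ⟨fun b hb j => payment_mem_Icc ε hε b hb j, fun b b' hb hb' _ j => ?_⟩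
  obtain ⟨h1, h2⟩ := payment_mem_Icc ε hε b hb j
  obtain ⟨h3, h4⟩ := payment_mem_Icc ε hε b' hb' j
  rw [abs_sub_le_iff]
  constructor <;> linarith
end

section
/- Lower bound for differentially private multi-item auctions: let n ≥ 2, and let M be a mechanism that, for every valuation matrix v with entries v_{ij} ∈ [0,1] (the value of agent i for item j, with n unit-demand agents and n items), outputs a probability distribution M(v) over permutations π of {1,…,n}. Suppose (i) M is ε-differentially private: for any two valuation matrices v, v' with entries in [0,1] that differ only in the row of one agent, and every permutation π, Pr[M(v) = π] ≤ exp(ε)·Pr[M(v') = π]; and (ii) M achieves expected social welfare at least opt(v) − n/10 on every valuation matrix v with entries in [0,1], where opt(v) = max_π ∑_{i=1}^n v_{i,π(i)} and the expected welfare is E_{π ∼ M(v)}[∑_i v_{i,π(i)}]. Then exp(ε) ≥ n − 1. -/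
open scoped Classical
open Finset Function

/-!
Test the mechanism on the `n ^ n` single-minded profiles `v_f`, in which agent `i` wants only
item `f i`. The optimal welfare of `v_f` is the size of the image of `f`, which averages to
`n (1 - (1 - 1/n) ^ n) ≥ 3n/5`; so the welfare guarantee forces the total probability `A`,
over all `f` and agents `k`, that `k` receives `f k` to be at least `n ^ (n + 1) / 2`.
On the other hand, if agent `k` changes its wish from `f k` to `j`, privacy bounds the
probability that `k` receives `j` by `exp ε` times what it was under `v_f`. Summing over all
`f`, `k` and `j ≠ f k`, each profile appears `n - 1` times on the left, which gives
`(n - 1) A ≤ exp ε (n ^ (n + 1) - A) ≤ exp ε A`.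
-/

namespace MultiItemAuction

section Counting

variable {α β : Type*} [Fintype α] [DecidableEq α] [Fintype β] [DecidableEq β]

theorem sum_sum_erase_update {R : Type*} [Ring R] (k : α) (G : (α → β) → R) :
    ∑ f : α → β, ∑ j ∈ univ.erase (f k), G (update f k j)
      = ((Fintype.card β : R) - 1) * ∑ f, G f := by
  have hswap : ∑ f : α → β, ∑ j ∈ univ.erase (f k), G (update f k j)
      = ∑ f : α → β, ∑ _j ∈ univ.erase (f k), G f := by
    rw [sum_sigma', sum_sigma']
    -- `(f, j) ↦ (update f k j, f k)` is an involution of `{(f, j) | j ≠ f k}`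
    refine sum_nbij' (fun x => ⟨update x.1 k x.2, x.1 k⟩) (fun x => ⟨update x.1 k x.2, x.1 k⟩)
      ?_ ?_ ?_ ?_ ?_ <;> rintro ⟨f, j⟩ hj
    all_goals simp_all [eq_comm]
  rw [hswap, mul_sum]
  refine sum_congr rfl fun f _ => ?_
  rw [sum_const, card_erase_of_mem (mem_univ _), card_univ, nsmul_eq_mul,
    Nat.cast_sub (Fintype.card_pos_iff.2 ⟨f k⟩), Nat.cast_one]

theorem card_filter_mem_image (j : β) :
    #{f : α → β | j ∈ univ.image f}
      = Fintype.card β ^ Fintype.card α - (Fintype.card β - 1) ^ Fintype.card α := by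
  have hmiss : ({f : α → β | j ∉ univ.image f} : Finset _)
      = Fintype.piFinset fun _ => univ.erase j := by
    ext f; simp [eq_comm]
  have hsplit := card_filter_add_card_filter_not (s := (univ : Finset (α → β)))
    (fun f => j ∈ univ.image f)
  rw [hmiss, Fintype.card_piFinset, card_univ, Fintype.card_fun] at hsplit
  simp only [card_erase_of_mem (mem_univ j), card_univ, prod_const] at hsplit
  omega

theorem sum_card_image :
    ∑ f : α → β, #(univ.image f)
      = Fintype.card β *
          (Fintype.card β ^ Fintype.card α - (Fintype.card β - 1) ^ Fintype.card α) := by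
  calc ∑ f : α → β, #(univ.image f)
      = ∑ f : α → β, ∑ j, if j ∈ univ.image f then 1 else 0 := by simp [sum_boole]
    _ = ∑ j, #{f : α → β | j ∈ univ.image f} := by rw [sum_comm]; simp [sum_boole]
    _ = _ := by simp only [card_filter_mem_image, sum_const, card_univ, smul_eq_mul]

theorem sub_one_pow_le_exp_neg_one_mul_pow {n : ℕ} (hn : 1 ≤ n) :
    ((n : ℝ) - 1) ^ n ≤ Real.exp (-1) * (n : ℝ) ^ n := by
  have hn0 : (n : ℝ) ≠ 0 := by positivity
  calc ((n : ℝ) - 1) ^ n = (1 - 1 / n) ^ n * (n : ℝ) ^ n := by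
        rw [← mul_pow, sub_mul, one_div_mul_cancel hn0, one_mul]
    _ ≤ Real.exp (-1) * (n : ℝ) ^ n := by
        gcongr
        exact Real.one_sub_div_pow_le_exp_neg (by exact_mod_cast hn)

theorem three_fifths_mul_le_sum_card_image (ι : Type*) [Fintype ι] [DecidableEq ι] [Nonempty ι] :
    3 / 5 * (Fintype.card ι : ℝ) * Fintype.card ι ^ Fintype.card ι
      ≤ ∑ f : ι → ι, (#(univ.image f) : ℝ) := by
  rw [← Nat.cast_sum, sum_card_image]
  set n := Fintype.card ι
  have hn : 1 ≤ n := Fintype.card_pos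
  have hpow : (n - 1) ^ n ≤ n ^ n := Nat.pow_le_pow_left (Nat.sub_le n 1) n
  have hmiss : ((n : ℝ) - 1) ^ n ≤ 2 / 5 * (n : ℝ) ^ n := by
    have := sub_one_pow_le_exp_neg_one_mul_pow hn
    nlinarith [Real.exp_neg_one_lt_d9, pow_pos (show (0 : ℝ) < n by positivity) n]
  push_cast [hpow, Nat.cast_sub hn]
  nlinarith [mul_le_mul_of_nonneg_left hmiss (Nat.cast_nonneg n)]

end Counting

section DoubleCounting

variable {α β : Type*} [Fintype α] [DecidableEq α] [Fintype β] [DecidableEq β]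

/-- `P f k j` is read as the probability that agent `k` gets item `j` when every agent `i`
asks for item `f i`; `hdp` says that agent `k` switching its request to `j` raises that
probability by a factor at most `c`. -/
theorem card_sub_one_mul_sum_le (P : (α → β) → α → β → ℝ) (c : ℝ)
    (hP : ∀ f k, ∑ j, P f k j = 1) (hdp : ∀ f k j, P (update f k j) k j ≤ c * P f k j) :
    ((Fintype.card β : ℝ) - 1) * ∑ f, ∑ k, P f k (f k)
      ≤ c * (Fintype.card α * Fintype.card β ^ Fintype.card α - ∑ f, ∑ k, P f k (f k)) := by
  have hmiss : ∀ f k, ∑ j ∈ univ.erase (f k), P f k j = 1 - P f k (f k) := fun f k => by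
    rw [sum_erase_eq_sub (mem_univ _), hP]
  have hk : ∀ k, ((Fintype.card β : ℝ) - 1) * ∑ f, P f k (f k)
      ≤ c * (Fintype.card β ^ Fintype.card α - ∑ f, P f k (f k)) := fun k =>
    calc ((Fintype.card β : ℝ) - 1) * ∑ f, P f k (f k)
        = ∑ f : α → β, ∑ j ∈ univ.erase (f k), P (update f k j) k j := by
          rw [← sum_sum_erase_update k fun g => P g k (g k)]
          simp only [update_self]
      _ ≤ c * ∑ f : α → β, ∑ j ∈ univ.erase (f k), P f k j := by
          simp only [mul_sum]
          gcongr with f _ j _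
          exact hdp f k j
      _ = c * (Fintype.card β ^ Fintype.card α - ∑ f, P f k (f k)) := by
          simp [hmiss, sum_sub_distrib]
  calc ((Fintype.card β : ℝ) - 1) * ∑ f, ∑ k, P f k (f k)
      = ∑ k, ((Fintype.card β : ℝ) - 1) * ∑ f, P f k (f k) := by rw [sum_comm, mul_sum]
    _ ≤ ∑ k, c * (Fintype.card β ^ Fintype.card α - ∑ f, P f k (f k)) :=
        sum_le_sum fun k _ => hk k
    _ = _ := by rw [← mul_sum, sum_sub_distrib, sum_const, card_univ, nsmul_eq_mul, sum_comm]

end DoubleCounting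

section Allocation

variable {α β ι : Type*} [Fintype ι] [DecidableEq ι]

def singleMinded [DecidableEq β] (f : α → β) : α → β → ℝ :=
  fun i j => if f i = j then 1 else 0

theorem singleMinded_mem_Icc [DecidableEq β] (f : α → β) (i : α) (j : β) :
    singleMinded f i j ∈ Set.Icc (0 : ℝ) 1 := by
  unfold singleMinded
  split_ifs <;> simp

theorem singleMinded_update_of_ne [DecidableEq α] [DecidableEq β] (f : α → β) {k i : α}
    (h : i ≠ k) (j : β) : singleMinded (update f k j) i = singleMinded f i := by
  funext j'
  simp [singleMinded, update_of_ne h]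

def allocProb (p : Equiv.Perm ι → ℝ) (k j : ι) : ℝ :=
  ∑ π with π k = j, p π

theorem sum_allocProb (p : Equiv.Perm ι → ℝ) (k : ι) : ∑ j, allocProb p k j = ∑ π, p π :=
  sum_fiberwise _ _ _

theorem allocProb_le_mul {p q : Equiv.Perm ι → ℝ} {c : ℝ} (h : ∀ π, p π ≤ c * q π) (k j : ι) :
    allocProb p k j ≤ c * allocProb q k j := by
  rw [allocProb, allocProb, mul_sum]
  exact sum_le_sum fun π _ => h π

theorem sum_mul_welfare_singleMinded (p : Equiv.Perm ι → ℝ) (f : ι → ι) :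
    ∑ π, p π * ∑ i, singleMinded f i (π i) = ∑ k, allocProb p k (f k) := by
  simp only [allocProb, singleMinded, mul_sum, sum_filter, mul_ite, mul_one, mul_zero, eq_comm]
  exact sum_comm

theorem exists_perm_card_image_le_welfare (f : ι → ι) :
    ∃ π : Equiv.Perm ι, (#(univ.image f) : ℝ) ≤ ∑ i, singleMinded f i (π i) := by
  obtain ⟨s, -, hinj, himage⟩ :=
    exists_subset_injOn_image_eq_of_surjOn (f := f) Set.univ (univ.image f) (by simp [Set.SurjOn])
  obtain ⟨g, hg⟩ := exists_equiv_extend_of_card_eq (card_univ (α := ι)).symm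
    (subset_univ (s.image f)) hinj
  refine ⟨g.trans (Equiv.subtypeUnivEquiv mem_univ), ?_⟩
  calc (#(univ.image f) : ℝ) = ∑ i ∈ s, singleMinded f i (g i) := by
        rw [← himage, card_image_of_injOn hinj, card_eq_sum_ones, Nat.cast_sum]
        refine sum_congr rfl fun i hi => ?_
        simp [singleMinded, hg i hi]
    _ ≤ ∑ i, singleMinded f i (g i) :=
        sum_le_sum_of_subset_of_nonneg (subset_univ s) fun i _ _ => (singleMinded_mem_Icc f _ _).1

end Allocation

end MultiItemAuction

open MultiItemAuction

/-- Lower bound for differentially private multi-item auctions: any (not necessarily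
truthful) randomized allocation rule `M` over perfect matchings (permutations) of `n`
unit-demand agents to `n` items that is `ε`-differentially private and always achieves
expected social welfare at least `opt(v) − n/10` must satisfy `exp(ε) ≥ n − 1`. -/
theorem multiItem_lower_bound (n : ℕ) (hn : 2 ≤ n) (ε : ℝ)
    (M : (Fin n → Fin n → ℝ) → Equiv.Perm (Fin n) → ℝ)
    (hprob : ∀ v : Fin n → Fin n → ℝ, (∀ i j, v i j ∈ Set.Icc (0 : ℝ) 1) →
      (∀ π : Equiv.Perm (Fin n), 0 ≤ M v π) ∧ (∑ π : Equiv.Perm (Fin n), M v π = 1))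
    (hdp : ∀ v v' : Fin n → Fin n → ℝ, (∀ i j, v i j ∈ Set.Icc (0 : ℝ) 1) →
      (∀ i j, v' i j ∈ Set.Icc (0 : ℝ) 1) →
      (∃ i : Fin n, ∀ k : Fin n, k ≠ i → v k = v' k) →
      ∀ π : Equiv.Perm (Fin n), M v π ≤ Real.exp ε * M v' π)
    (hwelfare : ∀ v : Fin n → Fin n → ℝ, (∀ i j, v i j ∈ Set.Icc (0 : ℝ) 1) →
      (∑ π : Equiv.Perm (Fin n), M v π * ∑ i, v i (π i))
        ≥ (Finset.univ.sup' Finset.univ_nonempty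
            (fun π : Equiv.Perm (Fin n) => ∑ i, v i (π i))) - n / 10) :
    Real.exp ε ≥ n - 1 := by
  have : Nonempty (Fin n) := ⟨⟨0, by omega⟩⟩
  set P : (Fin n → Fin n) → Fin n → Fin n → ℝ := fun f => allocProb (M (singleMinded f)) with hP
  set A := ∑ f, ∑ k, P f k (f k)
  have hdc : ((n : ℝ) - 1) * A ≤ Real.exp ε * (n * n ^ n - A) := by
    simpa using card_sub_one_mul_sum_le P (Real.exp ε)
      (fun f k => by rw [hP, sum_allocProb, (hprob _ (singleMinded_mem_Icc f)).2])
      (fun f k j => allocProb_le_mul (hdp _ _ (singleMinded_mem_Icc _) (singleMinded_mem_Icc f)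
        ⟨k, fun i hi => singleMinded_update_of_ne f hi j⟩) k j)
  have hwelf : ∀ f : Fin n → Fin n, (#(univ.image f) : ℝ) - n / 10 ≤ ∑ k, P f k (f k) := by
    intro f
    obtain ⟨π, hπ⟩ := exists_perm_card_image_le_welfare f
    have := hwelfare _ (singleMinded_mem_Icc f)
    rw [sum_mul_welfare_singleMinded] at this
    linarith [le_sup' (fun π : Equiv.Perm (Fin n) => ∑ i, singleMinded f i (π i)) (mem_univ π)]
  have hA : (n : ℝ) * n ^ n ≤ 2 * A := by
    have hsum := sum_le_sum fun f (_ : f ∈ univ) => hwelf f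
    have hcount := three_fifths_mul_le_sum_card_image (Fin n)
    simp only [sum_sub_distrib, sum_const, card_univ, Fintype.card_fun, Fintype.card_fin,
      nsmul_eq_mul, Nat.cast_pow] at hsum hcount
    linarith
  have hApos : 0 < A := by
    have : (0 : ℝ) < n * n ^ n := by positivity
    linarith
  have hle : ((n : ℝ) - 1) * A ≤ Real.exp ε * A :=
    hdc.trans (mul_le_mul_of_nonneg_left (by linarith) (Real.exp_nonneg ε))
  exact le_of_mul_le_mul_right hle hApos
end

section
/- Lower bound for differentially private spanning-tree procurement: there exists k₀ such that for all integers k ≥ k₀ the following holds. Let G be the complete graph on k vertices, and let M be a mechanism that, for every cost vector c assigning each edge of G a cost in [0,1], outputs a probability distribution M(c) over spanning trees of G. Suppose (i) M is ε-differentially private: for any two cost vectors c, c' with entries in [0,1] that differ in the cost of only one edge, and every spanning tree T, Pr[M(c) = T] ≤ exp(ε)·Pr[M(c') = T]; and (ii) for every cost vector c with entries in [0,1], the expected total cost E_{T ∼ M(c)}[∑_{e ∈ T} c(e)] is at most opt(c) + k/24, where opt(c) is the minimum total cost of a spanning tree of G under c. Then exp(ε) ≥ (2k − 1)/48. -/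
/-!
Draw the edge costs independently from `{0, 1}`, each edge costing `1` with probability
`q = k / (k + 24)`. Joining every vertex `v ≠ 0` to a smaller vertex by a cheap edge when there
is one gives a spanning tree of expected cost at most `∑_{v ≥ 1} q ^ v ≤ q / (1 - q) = k / 24`,
so an accurate mechanism has expected cost `S ≤ k / 12`. Since costs are `0` or `1`, `S` is the
expected number of expensive edges of the chosen tree, and `k - 1 - S` that of its cheap edges.
Privacy compares the probability that a cheap edge `e` is chosen with the probability that it is
chosen after `c e` is raised to `1`; under the Bernoulli costs this flip trades weight `1 - q`
for `q`, so `q (k - 1 - S) ≤ exp ε (1 - q) S`, which forces `exp ε ≥ (11 k - 12) / 24`.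
-/

open scoped Classical
open Finset

/-- A finset `T` of potential edges on vertex set `Fin k` is a spanning tree of the
complete graph on `k` vertices if it consists of non-loop edges, the graph it spans is
connected, and it has exactly `k − 1` edges. -/
def IsSpanningTree (k : ℕ) (T : Finset (Sym2 (Fin k))) : Prop :=
  (∀ e ∈ T, ¬ e.IsDiag) ∧
    (SimpleGraph.fromEdgeSet (T : Set (Sym2 (Fin k)))).Connected ∧ T.card = k - 1

open Function

section BernoulliProfiles

def boolCost {α : Type*} (c : α → Bool) (a : α) : ℝ := if c a then 1 else 0

theorem boolCost_mem_Icc {α : Type*} (c : α → Bool) (a : α) :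
    boolCost c a ∈ Set.Icc (0 : ℝ) 1 := by
  unfold boolCost
  split_ifs <;> norm_num

theorem sum_boolCost {α : Type*} (c : α → Bool) (T : Finset α) :
    ∑ a ∈ T, boolCost c a = #(T.filter (c ·)) :=
  sum_boole _ T

variable {α : Type*} [Fintype α]

noncomputable def bernoulliWeight (q : ℝ) (c : α → Bool) : ℝ :=
  ∏ a, if c a then q else 1 - q

theorem bernoulliWeight_nonneg {q : ℝ} (hq0 : 0 ≤ q) (hq1 : q ≤ 1) (c : α → Bool) :
    0 ≤ bernoulliWeight q c :=
  prod_nonneg fun a _ => by split <;> linarith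

theorem sum_prod_ite_bool [DecidableEq α] {R : Type*} [CommSemiring R] (f g : α → R) :
    ∑ c : α → Bool, ∏ a, (if c a then f a else g a) = ∏ a, (f a + g a) := by
  rw [← Fintype.prod_sum fun a (b : Bool) => if b then f a else g a]
  simp

theorem sum_bernoulliWeight [DecidableEq α] (q : ℝ) :
    ∑ c : α → Bool, bernoulliWeight q c = 1 := by
  simp [bernoulliWeight, sum_prod_ite_bool]

theorem sum_bernoulliWeight_mul_prod_boolCost [DecidableEq α] (q : ℝ) (B : Finset α) :
    ∑ c : α → Bool, bernoulliWeight q c * ∏ a ∈ B, boolCost c a = q ^ #B := by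
  have hterm : ∀ c : α → Bool, bernoulliWeight q c * ∏ a ∈ B, boolCost c a =
      ∏ a, if c a then q else if a ∈ B then 0 else 1 - q := by
    intro c
    rw [bernoulliWeight, ← Fintype.prod_ite_mem B (boolCost c), ← prod_mul_distrib]
    refine prod_congr rfl fun a _ => ?_
    by_cases ha : a ∈ B <;> cases hc : c a <;> simp [ha, hc, boolCost]
  rw [sum_congr rfl fun c _ => hterm c, sum_prod_ite_bool, ← prod_const,
    ← Fintype.prod_ite_mem B]
  refine prod_congr rfl fun a _ => ?_
  split_ifs <;> ring

theorem bernoulliWeight_update [DecidableEq α] (q : ℝ) (c : α → Bool) (a : α) (b : Bool) :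
    bernoulliWeight q (update c a b) =
      (if b then q else 1 - q) * ∏ x ∈ univ \ {a}, if c x then q else 1 - q := by
  rw [bernoulliWeight, ← prod_update_of_mem (mem_univ a)]
  refine prod_congr rfl fun x _ => ?_
  rcases eq_or_ne x a with rfl | hx
  · simp
  · simp [update_of_ne hx]

theorem mul_sum_bernoulliWeight_update_true [DecidableEq α] (q : ℝ) (a : α)
    (G : (α → Bool) → ℝ) :
    q * ∑ c with c a = false, bernoulliWeight q c * G (update c a true) =
      (1 - q) * ∑ c with c a = true, bernoulliWeight q c * G c := by
  rw [mul_sum, mul_sum]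
  refine sum_nbij' (update · a true) (update · a false) (by simp) (by simp)
    (fun c hc => by simp_all) (fun c hc => by simp_all) fun c hc => ?_
  simp only [mem_filter, mem_univ, true_and] at hc
  have hc' : update c a false = c := by rw [← hc, update_eq_self]
  rw [← hc', update_idem, bernoulliWeight_update, bernoulliWeight_update]
  simp only [Bool.false_eq_true, if_false, if_true]
  ring

end BernoulliProfiles

section Tradeoff

variable {α : Type*} [Fintype α]

theorem sum_mul_card_filter [DecidableEq α] (P : Finset α → ℝ) (s : α → Prop)
    [DecidablePred s] :
    ∑ T, P T * #(T.filter s) = ∑ a with s a, ∑ T with a ∈ T, P T := by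
  simp_rw [card_eq_sum_ones, Nat.cast_sum, Nat.cast_one, mul_sum, mul_one]
  exact sum_comm' fun T a => by simp

theorem sub_sum_mul_card_filter {P : Finset α → ℝ} {m : ℕ}
    (hcard : ∀ T, P T ≠ 0 → #T = m) (hsum : ∑ T, P T = 1) (s : α → Prop)
    [DecidablePred s] :
    m - ∑ T, P T * #(T.filter s) = ∑ T, P T * #(T.filter fun a => ¬ s a) := by
  have hm : ∑ T, P T * #T = m := by
    rw [← mul_one (m : ℝ), ← hsum, mul_sum]
    refine sum_congr rfl fun T _ => ?_
    by_cases hT : P T = 0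
    · simp [hT]
    · rw [hcard T hT, mul_comm]
  have hsplit : ∀ T : Finset α,
      P T * #T = P T * #(T.filter s) + P T * #(T.filter fun a => ¬ s a) := by
    intro T
    rw [← card_filter_add_card_filter_not (s := T) s, Nat.cast_add, mul_add]
  rw [← hm, sum_congr rfl fun T _ => hsplit T, sum_add_distrib, add_sub_cancel_left]

theorem dp_tradeoff [DecidableEq α] {P : (α → Bool) → Finset α → ℝ} {m : ℕ} {q K : ℝ}
    (hq0 : 0 ≤ q) (hq1 : q ≤ 1)
    (hcard : ∀ c T, P c T ≠ 0 → #T = m) (hsum : ∀ c, ∑ T, P c T = 1)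
    (hDP : ∀ c a T, P c T ≤ K * P (update c a true) T) :
    q * (m - ∑ c, bernoulliWeight q c * ∑ T, P c T * #(T.filter (c ·)))
      ≤ K * ((1 - q) * ∑ c, bernoulliWeight q c * ∑ T, P c T * #(T.filter (c ·))) := by
  set π : (α → Bool) → α → ℝ := fun c a => ∑ T with a ∈ T, P c T
  have hcheap : ∀ c, m - ∑ T, P c T * #(T.filter (c ·)) = ∑ a with c a = false, π c a := by
    intro c
    rw [sub_sum_mul_card_filter (hcard c) (hsum c), sum_mul_card_filter]
    simp_rw [Bool.not_eq_true]
    rfl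
  have hswap : ∀ b, ∑ c, bernoulliWeight q c * ∑ a with c a = b, π c a =
      ∑ a, ∑ c with c a = b, bernoulliWeight q c * π c a := by
    intro b
    simp_rw [mul_sum]
    exact sum_comm' fun c a => by simp
  have hflip : ∀ a, q * ∑ c with c a = false, bernoulliWeight q c * π c a ≤
      K * ((1 - q) * ∑ c with c a = true, bernoulliWeight q c * π c a) := by
    intro a
    calc q * ∑ c with c a = false, bernoulliWeight q c * π c a
        ≤ q * ∑ c with c a = false, bernoulliWeight q c * (K * π (update c a true) a) := by
          gcongr with c
          · exact bernoulliWeight_nonneg hq0 hq1 c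
          · rw [mul_sum]
            exact sum_le_sum fun T _ => hDP c a T
      _ = K * (q * ∑ c with c a = false, bernoulliWeight q c * π (update c a true) a) := by
          simp_rw [mul_sum, mul_left_comm K]
      _ = K * ((1 - q) * ∑ c with c a = true, bernoulliWeight q c * π c a) := by
          rw [mul_sum_bernoulliWeight_update_true q a (π · a)]
  have hmean : m - ∑ c, bernoulliWeight q c * ∑ T, P c T * #(T.filter (c ·)) =
      ∑ c, bernoulliWeight q c * (m - ∑ T, P c T * #(T.filter (c ·))) := by
    simp_rw [mul_sub, sum_sub_distrib, ← sum_mul, sum_bernoulliWeight, one_mul]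
  calc q * (m - ∑ c, bernoulliWeight q c * ∑ T, P c T * #(T.filter (c ·)))
      = ∑ a, q * ∑ c with c a = false, bernoulliWeight q c * π c a := by
        simp_rw [hmean, hcheap, hswap, mul_sum]
    _ ≤ ∑ a, K * ((1 - q) * ∑ c with c a = true, bernoulliWeight q c * π c a) :=
        sum_le_sum fun a _ => hflip a
    _ = K * ((1 - q) * ∑ c, bernoulliWeight q c * ∑ T, P c T * #(T.filter (c ·))) := by
        rw [← mul_sum, ← mul_sum, ← hswap]
        simp_rw [sum_mul_card_filter]
        rfl

end Tradeoff

section ParentTree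

variable {k : ℕ} [NeZero k]

def parentTree (par : Fin k → Fin k) : Finset (Sym2 (Fin k)) :=
  (univ.filter (· ≠ 0)).image fun v => s(par v, v)

variable {par : Fin k → Fin k}

theorem injOn_parentEdge (hpar : ∀ v ≠ 0, par v < v) :
    Set.InjOn (fun v => s(par v, v)) {v | v ≠ 0} := by
  intro x hx y hy hxy
  rcases Sym2.eq_iff.1 hxy with ⟨-, h⟩ | ⟨hxy, hyx⟩
  · exact h
  · exact absurd hxy ((hpar x hx).trans_eq hyx |>.trans (hpar y hy)).ne

theorem card_parentTree (hpar : ∀ v ≠ 0, par v < v) : #(parentTree par) = k - 1 := by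
  rw [parentTree, card_image_of_injOn (by simpa using injOn_parentEdge hpar), filter_ne',
    card_erase_of_mem (mem_univ _), card_univ, Fintype.card_fin]

theorem parentTree_connected (hpar : ∀ v ≠ 0, par v < v) :
    (SimpleGraph.fromEdgeSet (parentTree par : Set (Sym2 (Fin k)))).Connected := by
  set G := SimpleGraph.fromEdgeSet (parentTree par : Set (Sym2 (Fin k)))
  have hroot : ∀ v, G.Reachable v 0 := by
    intro v
    induction v using WellFoundedLT.induction with
    | _ v ih =>
      by_cases hv : v = 0
      · rw [hv]
      · have hadj : G.Adj v (par v) := by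
          rw [SimpleGraph.fromEdgeSet_adj, Sym2.eq_swap]
          exact ⟨mem_image_of_mem _ (by simpa using hv), (hpar v hv).ne'⟩
        exact hadj.reachable.trans (ih _ (hpar v hv))
  exact (SimpleGraph.connected_iff _).2 ⟨fun u v => (hroot u).trans (hroot v).symm, ⟨0⟩⟩

theorem isSpanningTree_parentTree (hpar : ∀ v ≠ 0, par v < v) :
    IsSpanningTree k (parentTree par) := by
  refine ⟨?_, parentTree_connected hpar, card_parentTree hpar⟩
  simp only [parentTree, mem_image, mem_filter, mem_univ, true_and]
  rintro _ ⟨v, hv, rfl⟩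
  exact fun h => (hpar v hv).ne (Sym2.mk_isDiag_iff.1 h)

end ParentTree

section ExpectedMinTreeCost

noncomputable def minTreeCost (k : ℕ) (c : Sym2 (Fin k) → ℝ) : ℝ :=
  sInf {x : ℝ | ∃ T : Finset (Sym2 (Fin k)), IsSpanningTree k T ∧ x = ∑ e ∈ T, c e}

theorem minTreeCost_le {k : ℕ} {c : Sym2 (Fin k) → ℝ} (hc : ∀ e, 0 ≤ c e)
    {T : Finset (Sym2 (Fin k))} (hT : IsSpanningTree k T) :
    minTreeCost k c ≤ ∑ e ∈ T, c e :=
  csInf_le ⟨0, by rintro _ ⟨T, -, rfl⟩; exact sum_nonneg fun e _ => hc e⟩ ⟨T, hT, rfl⟩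

variable {k : ℕ} [NeZero k]

noncomputable def cheapParent (c : Sym2 (Fin k) → Bool) (v : Fin k) : Fin k :=
  if h : ∃ u < v, c s(u, v) = false then h.choose else 0

theorem cheapParent_lt (c : Sym2 (Fin k) → Bool) {v : Fin k} (hv : v ≠ 0) :
    cheapParent c v < v := by
  unfold cheapParent
  split_ifs with h
  · exact h.choose_spec.1
  · exact Fin.pos_iff_ne_zero.2 hv

theorem card_filter_parentTree_cheapParent_le (c : Sym2 (Fin k) → Bool) :
    #((parentTree (cheapParent c)).filter (c ·)) ≤
      #{v : Fin k | v ≠ 0 ∧ ∀ u < v, c s(u, v)} := by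
  rw [parentTree, filter_image]
  refine card_image_le.trans (card_le_card fun v hv => ?_)
  simp only [filter_filter, mem_filter, mem_univ, true_and] at hv ⊢
  refine ⟨hv.1, fun u hu => ?_⟩
  by_contra hcheap
  have h : ∃ u < v, c s(u, v) = false := ⟨u, hu, by simpa using hcheap⟩
  have hpar : c s(cheapParent c v, v) = false := by
    rw [cheapParent, dif_pos h]
    exact h.choose_spec.2
  exact Bool.false_ne_true (hpar ▸ hv.2)

theorem minTreeCost_boolCost_le (c : Sym2 (Fin k) → Bool) :
    minTreeCost k (boolCost c) ≤ #{v : Fin k | v ≠ 0 ∧ ∀ u < v, c s(u, v)} := by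
  refine (minTreeCost_le (fun e => (boolCost_mem_Icc c e).1)
    (isSpanningTree_parentTree fun _ => cheapParent_lt c)).trans ?_
  rw [sum_boolCost]
  exact_mod_cast card_filter_parentTree_cheapParent_le c

theorem sum_bernoulliWeight_mul_card_costly (q : ℝ) :
    ∑ c : Sym2 (Fin k) → Bool,
        bernoulliWeight q c * #{v : Fin k | v ≠ 0 ∧ ∀ u < v, c s(u, v)} =
      ∑ v : Fin k with v ≠ 0, q ^ (v : ℕ) := by
  have hlower : ∀ v : Fin k, Set.InjOn (fun u => s(u, v)) (Iio v : Set (Fin k)) := by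
    intro v u hu u' _ h
    rcases Sym2.eq_iff.1 h with ⟨h, -⟩ | ⟨h, -⟩
    · exact h
    · exact absurd h (mem_Iio.1 hu).ne
  have hcount : ∀ c : Sym2 (Fin k) → Bool,
      (#{v : Fin k | v ≠ 0 ∧ ∀ u < v, c s(u, v)} : ℝ) =
      ∑ v : Fin k with v ≠ 0, ∏ e ∈ (Iio v).image fun u => s(u, v), boolCost c e := by
    intro c
    rw [sum_congr rfl fun v _ => prod_image (hlower v), natCast_card_filter, sum_filter]
    refine sum_congr rfl fun v _ => ?_
    simp_rw [boolCost, prod_boole]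
    split_ifs <;> simp_all
  simp_rw [hcount, mul_sum]
  rw [sum_comm]
  refine sum_congr rfl fun v _ => ?_
  rw [sum_bernoulliWeight_mul_prod_boolCost, card_image_of_injOn (hlower v), Fin.card_Iio]

theorem sum_pow_val_ne_zero_le {q : ℝ} (hq0 : 0 ≤ q) (hq1 : q < 1) :
    ∑ v : Fin k with v ≠ 0, q ^ (v : ℕ) ≤ q / (1 - q) := by
  have hgeom := geom_sum_Ico_le_of_lt_one (m := 0) (n := k) hq0 hq1
  rw [filter_ne', sum_erase_eq_sub (mem_univ _), Fin.val_zero, pow_zero,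
    Fin.sum_univ_eq_sum_range (q ^ ·), range_eq_Ico]
  rw [pow_zero] at hgeom
  have h1q : 0 < 1 - q := by linarith
  calc _ ≤ 1 / (1 - q) - 1 := by linarith
    _ = q / (1 - q) := by field_simp; ring

theorem sum_bernoulliWeight_mul_minTreeCost_le {q : ℝ} (hq0 : 0 ≤ q) (hq1 : q < 1) :
    ∑ c : Sym2 (Fin k) → Bool, bernoulliWeight q c * minTreeCost k (boolCost c) ≤
      q / (1 - q) :=
  calc _ ≤ ∑ c : Sym2 (Fin k) → Bool,
          bernoulliWeight q c * #{v : Fin k | v ≠ 0 ∧ ∀ u < v, c s(u, v)} :=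
        sum_le_sum fun c _ =>
          mul_le_mul_of_nonneg_left (minTreeCost_boolCost_le c) (bernoulliWeight_nonneg hq0 hq1.le c)
    _ = ∑ v : Fin k with v ≠ 0, q ^ (v : ℕ) := sum_bernoulliWeight_mul_card_costly q
    _ ≤ q / (1 - q) := sum_pow_val_ne_zero_le hq0 hq1

theorem sum_bernoulliWeight_mul_cost_le {q δ : ℝ} (hq0 : 0 ≤ q) (hq1 : q < 1)
    {P : (Sym2 (Fin k) → Bool) → Finset (Sym2 (Fin k)) → ℝ}
    (hacc : ∀ c, ∑ T, P c T * ∑ e ∈ T, boolCost c e ≤ minTreeCost k (boolCost c) + δ) :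
    ∑ c, bernoulliWeight q c * ∑ T, P c T * #(T.filter (c ·)) ≤ q / (1 - q) + δ :=
  calc _ ≤ ∑ c : Sym2 (Fin k) → Bool,
        bernoulliWeight q c * (minTreeCost k (boolCost c) + δ) := by
        refine sum_le_sum fun c _ =>
          mul_le_mul_of_nonneg_left ?_ (bernoulliWeight_nonneg hq0 hq1.le c)
        simpa only [sum_boolCost] using hacc c
    _ ≤ q / (1 - q) + δ := by
        simp_rw [mul_add, sum_add_distrib, ← sum_mul, sum_bernoulliWeight, one_mul]
        gcongr
        exact sum_bernoulliWeight_mul_minTreeCost_le hq0 hq1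

end ExpectedMinTreeCost

theorem le_of_procurement_tradeoff {k S K : ℝ} (hk : 2 ≤ k) (hK : 0 ≤ K) (hS : S ≤ k / 12)
    (h : k / (k + 24) * (k - 1 - S) ≤ K * ((1 - k / (k + 24)) * S)) : (2 * k - 1) / 48 ≤ K := by
  have hpos : 0 < k + 24 := by linarith
  rw [one_sub_div hpos.ne', add_sub_cancel_left] at h
  field_simp at h
  nlinarith

/-- Lower bound for differentially private spanning-tree procurement: there exists `k₀`
such that for all `k ≥ k₀`, any (not necessarily truthful) randomized mechanism `M`
choosing a spanning tree of the complete graph on `k` vertices that is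
`ε`-differentially private and has expected total cost at most `opt(c) + k/24` on every
cost vector `c` with entries in `[0,1]` must satisfy `exp(ε) ≥ (2k − 1)/48`. -/
theorem spanningTree_procurement_lower_bound :
    ∃ k₀ : ℕ, ∀ k : ℕ, k₀ ≤ k → ∀ ε : ℝ,
      ∀ M : (Sym2 (Fin k) → ℝ) → Finset (Sym2 (Fin k)) → ℝ,
      (∀ c : Sym2 (Fin k) → ℝ, (∀ e : Sym2 (Fin k), ¬ e.IsDiag → c e ∈ Set.Icc (0 : ℝ) 1) →
        (∀ T, 0 ≤ M c T) ∧ (∀ T, ¬ IsSpanningTree k T → M c T = 0) ∧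
          (∑ T : Finset (Sym2 (Fin k)), M c T = 1)) →
      (∀ c c' : Sym2 (Fin k) → ℝ,
        (∀ e : Sym2 (Fin k), ¬ e.IsDiag → c e ∈ Set.Icc (0 : ℝ) 1) →
        (∀ e : Sym2 (Fin k), ¬ e.IsDiag → c' e ∈ Set.Icc (0 : ℝ) 1) →
        (∃ e₀ : Sym2 (Fin k), ∀ e : Sym2 (Fin k), e ≠ e₀ → c e = c' e) →
        ∀ T : Finset (Sym2 (Fin k)), M c T ≤ Real.exp ε * M c' T) →
      (∀ c : Sym2 (Fin k) → ℝ, (∀ e : Sym2 (Fin k), ¬ e.IsDiag → c e ∈ Set.Icc (0 : ℝ) 1) →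
        (∑ T : Finset (Sym2 (Fin k)), M c T * ∑ e ∈ T, c e)
          ≤ sInf {x : ℝ | ∃ T : Finset (Sym2 (Fin k)), IsSpanningTree k T ∧ x = ∑ e ∈ T, c e}
            + k / 24) →
      Real.exp ε ≥ (2 * k - 1) / 48 := by
  refine ⟨2, fun k hk ε M hM hDP hAcc => ?_⟩
  have : NeZero k := ⟨by omega⟩
  have hk' : (2 : ℝ) ≤ k := by exact_mod_cast hk
  set q : ℝ := k / (k + 24) with hq
  have hq0 : 0 ≤ q := by positivity
  have hq1 : q < 1 := (div_lt_one (by positivity)).2 (by linarith)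
  have hbool (c : Sym2 (Fin k) → Bool) (e : Sym2 (Fin k)) (_ : ¬ e.IsDiag) :
      boolCost c e ∈ Set.Icc (0 : ℝ) 1 :=
    boolCost_mem_Icc c e
  have hS := (sum_bernoulliWeight_mul_cost_le hq0 hq1 fun c => hAcc _ (hbool c)).trans_eq
    (show q / (1 - q) + k / 24 = k / 12 by rw [hq]; field_simp; ring)
  have htrade := dp_tradeoff (P := fun c => M (boolCost c)) (m := k - 1) hq0 hq1.le
    (fun c T hT => (not_not.1 (mt ((hM _ (hbool c)).2.1 T) hT)).2.2)
    (fun c => (hM _ (hbool c)).2.2)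
    (fun c a T => hDP _ _ (hbool c) (hbool _)
      ⟨a, fun e he => by simp only [boolCost, update_of_ne he]⟩ T)
  rw [Nat.cast_sub (by omega), Nat.cast_one] at htrade
  exact le_of_procurement_tradeoff hk' (Real.exp_pos ε).le hS htrade
end
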